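/- Let X be a compact Hausdorff abelian topological group, N a closed subgroup of X, and H ≤ N a subgroup that is not closed in X, such that H = C_D(X) for some countably infinite set D ⊆ X̂. Then there exists a countably infinite set B ⊆ N̂ of characters of N such that H = C_B(N). -/

import Mathlib

/-! Restrict the characters in `D` to `N`. A character of `D` whose restriction is shared
by infinitely many members of `D` vanishes on `C_D(X)`. So on `N`, membership in
`H = C_D(X)` means lying in the common kernel of the restrictions `K` of these characters and
in `C_A(N)`, where `A` is the set of restrictions of the others; restriction is finite-to-one
on those. `A` is infinite, since otherwise `H` would be `N` intersected with kernels of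
characters, hence closed. Finally the kernel condition is absorbed: for an enumeration `e` of
`K` and an injective sequence `β` in `A`, adjoining the characters `e j + β k` (`j ≤ k`)
to `A` gives a countable `B` with `C_B(N) = C_A(N) ∩ ⋂ ker (e j)`.
-/

open Filter Topology

/-- The circle group `𝕋 = ℝ/ℤ`. -/
abbrev Torus := AddCircle (1 : ℝ)

/-- The continuous characters of a topological abelian group `X`,
i.e. the continuous homomorphisms `X → 𝕋`. -/
abbrev GChar (X : Type*) [AddCommGroup X] [TopologicalSpace X] :=
  ContinuousAddMonoidHom X Torus

/-- `sU u = s_u(X) = {x ∈ X : u_n(x) → 0 in 𝕋}`. -/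
def sU {X : Type*} [AddCommGroup X] [TopologicalSpace X] (u : ℕ → GChar X) : Set X :=
  {x | Tendsto (fun n => u n x) atTop (𝓝 0)}

/-- `CB B = C_B(X) = {x ∈ X : for every ε > 0, ‖φ(x)‖ < ε for all but finitely
many φ ∈ B}`, where `‖·‖` on `𝕋 = ℝ/ℤ` is the distance to the nearest integer. -/
def CB {X : Type*} [AddCommGroup X] [TopologicalSpace X] (B : Set (GChar X)) : Set X :=
  {x | ∀ ε > 0, {φ ∈ B | ¬ ‖φ x‖ < ε}.Finite}

section Characters

variable {X : Type*} [AddCommGroup X] [TopologicalSpace X]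

theorem mem_sU_iff {u : ℕ → GChar X} {x : X} :
    x ∈ sU u ↔ ∀ ε > 0, {k | ¬ ‖u k x‖ < ε}.Finite := by
  simp [sU, Metric.tendsto_nhds, ← Nat.cofinite_eq_atTop, dist_zero_right]

theorem CB_union (A B : Set (GChar X)) : CB (A ∪ B) = CB A ∩ CB B := by
  ext x
  simp only [CB, Set.mem_inter_iff, Set.mem_union, or_and_right, Set.ofPred_or,
    Set.finite_union, forall_and]
  rfl

theorem CB_eq_univ_of_finite {B : Set (GChar X)} (hB : B.Finite) : CB B = Set.univ :=
  Set.eq_univ_of_forall fun _ _ _ => hB.subset (Set.sep_subset _ _)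

theorem mem_CB_of_forall_eq_zero {B : Set (GChar X)} {x : X} (h : ∀ φ ∈ B, φ x = 0) :
    x ∈ CB B := by
  intro ε hε
  convert Set.finite_empty
  refine Set.eq_empty_of_forall_notMem fun φ hφ => hφ.2 ?_
  simpa [h φ hφ.1] using hε

theorem eq_zero_of_mem_CB {D : Set (GChar X)} {x : X} {φ : GChar X} (hx : x ∈ CB D)
    (hφ : {ψ ∈ D | ψ x = φ x}.Infinite) : φ x = 0 := by
  by_contra hne
  refine hφ ((hx ‖φ x‖ (norm_pos_iff.mpr hne)).subset fun ψ hψ => ⟨hψ.1, ?_⟩)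
  rw [hψ.2]
  exact lt_irrefl _

theorem CB_subset_sU {B : Set (GChar X)} {u : ℕ → GChar X} (hu : Function.Injective u)
    (huB : ∀ k, u k ∈ B) : CB B ⊆ sU u := fun x hx =>
  mem_sU_iff.mpr fun ε hε => Set.Finite.of_finite_image
    ((hx ε hε).subset (by rintro _ ⟨k, hk, rfl⟩; exact ⟨huB k, hk⟩)) hu.injOn

/-- On the left-hand side both `β k` and `e j + β k` tend to `0` as `k → ∞`, forcing
`e j = 0`; conversely, where all `e j` vanish, each `k` with `β k` large contributes only the
finitely many characters `e j + β k` with `j ≤ k`. -/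
theorem CB_union_image_add {A : Set (GChar X)} {β : ℕ → GChar X} (hβ : Function.Injective β)
    (hβA : ∀ k, β k ∈ A) (e : ℕ → GChar X) :
    CB (A ∪ (fun p : ℕ × ℕ => e p.1 + β p.2) '' {p | p.1 ≤ p.2}) =
      CB A ∩ {x | ∀ j, e j x = 0} := by
  rw [CB_union]
  ext x
  simp only [Set.mem_inter_iff, and_congr_right_iff]
  intro hxA
  have hβx : x ∈ sU β := CB_subset_sU hβ hβA hxA
  constructor
  · intro hx j
    have hshift : Tendsto (fun k => β (k + j) x) atTop (𝓝 0) :=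
      hβx.comp (tendsto_add_atTop_nat j)
    have hsum : Tendsto (fun k => (e j + β (k + j)) x) atTop (𝓝 0) :=
      CB_subset_sU (B := (fun p : ℕ × ℕ => e p.1 + β p.2) '' {p | p.1 ≤ p.2})
        (fun a b hab => Nat.add_right_cancel (hβ (add_left_cancel hab)))
        (fun k => ⟨(j, k + j), Nat.le_add_left j k, rfl⟩) hx
    have hconst : Tendsto (fun _ : ℕ => e j x) atTop (𝓝 0) := by
      simpa using hsum.sub hshift
    exact tendsto_const_nhds_iff.mp hconst
  · intro he ε hε
    refine ((mem_sU_iff.mp hβx ε hε).biUnion fun k _ =>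
      (Set.finite_Iic k).image fun j => e j + β k).subset ?_
    rintro _ ⟨⟨⟨j, k⟩, hjk, rfl⟩, hbad⟩
    refine Set.mem_biUnion (x := k) ?_ ⟨j, hjk, rfl⟩
    simpa [he j] using hbad

theorem exists_CB_eq_CB_inter_ker {A K : Set (GChar X)} (hA : A.Countable) (hAinf : A.Infinite)
    (hK : K.Countable) :
    ∃ B : Set (GChar X), B.Countable ∧ B.Infinite ∧
      CB B = CB A ∩ {x | ∀ χ ∈ K, χ x = 0} := by
  obtain ⟨e, he⟩ := (hK.insert 0).exists_eq_range (Set.insert_nonempty 0 K)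
  let β : ℕ → GChar X := fun k => hAinf.natEmbedding A k
  have hβ : Function.Injective β := Subtype.val_injective.comp (hAinf.natEmbedding A).injective
  refine ⟨_, hA.union ((Set.to_countable _).image _), hAinf.mono Set.subset_union_left,
    (CB_union_image_add hβ (fun k => (hAinf.natEmbedding A k).2) e).trans ?_⟩
  ext x
  have : (∀ j, e j x = 0) ↔ ∀ χ ∈ insert 0 K, χ x = 0 := by
    rw [he, Set.forall_mem_range]
  simp [this]

end Characters

section Restriction

variable {X Y : Type*} [AddCommGroup X] [TopologicalSpace X] [AddCommGroup Y] [TopologicalSpace Y]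

theorem mem_CB_image_comp_iff (g : Y →ₜ+ X) {E : Set (GChar X)}
    (hE : ∀ φ ∈ E, {ψ ∈ E | ψ.comp g = φ.comp g}.Finite) (y : Y) :
    y ∈ CB ((·.comp g) '' E) ↔ g y ∈ CB E := by
  have hbad : ∀ ε, {χ ∈ (·.comp g) '' E | ¬ ‖χ y‖ < ε} =
      (·.comp g) '' {φ ∈ E | ¬ ‖φ (g y)‖ < ε} := by
    intro ε
    ext χ
    constructor
    · rintro ⟨⟨φ, hφ, rfl⟩, hχ⟩
      exact ⟨φ, ⟨hφ, hχ⟩, rfl⟩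
    · rintro ⟨φ, ⟨hφ, hbad⟩, rfl⟩
      exact ⟨⟨φ, hφ, rfl⟩, hbad⟩
  refine forall₂_congr fun ε _ => ?_
  rw [hbad]
  refine ⟨fun hfin => Set.Finite.of_finite_fibers (·.comp g) hfin ?_, fun hfin => hfin.image _⟩
  rintro _ ⟨φ, hφ, rfl⟩
  exact (hE φ hφ.1).subset fun ψ hψ => ⟨hψ.1.1, hψ.2⟩

def infiniteFibers (g : Y →ₜ+ X) (D : Set (GChar X)) : Set (GChar X) :=
  {φ ∈ D | {ψ ∈ D | ψ.comp g = φ.comp g}.Infinite}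

theorem apply_eq_zero_of_mem_infiniteFibers {g : Y →ₜ+ X} {D : Set (GChar X)} {φ : GChar X}
    (hφ : φ ∈ infiniteFibers g D) {y : Y} (hy : g y ∈ CB (infiniteFibers g D)) :
    φ (g y) = 0 := by
  refine eq_zero_of_mem_CB hy <| hφ.2.mono fun ψ hψ => ⟨⟨hψ.1, ?_⟩, DFunLike.congr_fun hψ.2 y⟩
  simpa only [infiniteFibers, hψ.2] using hφ.2

theorem mem_CB_iff_infiniteFibers (g : Y →ₜ+ X) (D : Set (GChar X)) (y : Y) :
    g y ∈ CB D ↔ (∀ φ ∈ infiniteFibers g D, φ (g y) = 0) ∧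
      y ∈ CB ((·.comp g) '' (D \ infiniteFibers g D)) := by
  have hfin : ∀ φ ∈ D \ infiniteFibers g D,
      {ψ ∈ D \ infiniteFibers g D | ψ.comp g = φ.comp g}.Finite := fun φ hφ =>
    (Set.not_infinite.mp fun h => hφ.2 ⟨hφ.1, h⟩).subset fun ψ hψ => ⟨hψ.1.1, hψ.2⟩
  rw [mem_CB_image_comp_iff g hfin]
  conv_lhs => rw [← Set.union_sdiff_cancel (Set.sep_subset D _ : infiniteFibers g D ⊆ D)]
  rw [CB_union, Set.mem_inter_iff]
  exact and_congr_left fun _ =>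
    ⟨fun h _ hφ => apply_eq_zero_of_mem_infiniteFibers hφ h, mem_CB_of_forall_eq_zero⟩

end Restriction

theorem stmt19_general {X : Type*} [AddCommGroup X] [TopologicalSpace X]
    (N : AddSubgroup X) (hNclosed : IsClosed (N : Set X))
    (H : AddSubgroup X) (hHN : H ≤ N) (hHnotclosed : ¬ IsClosed (H : Set X))
    (D : Set (GChar X)) (hDcount : D.Countable)
    (hD : CB D = (H : Set X)) :
    ∃ B : Set (GChar N), B.Countable ∧ B.Infinite ∧ CB B = {n : N | (n : X) ∈ H} := by
  let ι : N →ₜ+ X := ⟨N.subtype, continuous_subtype_val⟩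
  let Dinf := infiniteFibers ι D
  have hH (n : N) : (n : X) ∈ H ↔
      (∀ φ ∈ Dinf, φ n = 0) ∧ n ∈ CB ((·.comp ι) '' (D \ Dinf)) := by
    rw [← SetLike.mem_coe, ← hD]
    exact mem_CB_iff_infiniteFibers ι D n
  have himage : ((·.comp ι) '' (D \ Dinf)).Infinite := by
    intro hfin
    refine hHnotclosed ?_
    have hHker : (H : Set X) = (N : Set X) ∩ ⋂ φ ∈ Dinf, φ ⁻¹' {0} := by
      ext x
      simp only [SetLike.mem_coe, Set.mem_inter_iff, Set.mem_iInter, Set.mem_preimage,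
        Set.mem_singleton_iff]
      refine ⟨fun hx => ⟨hHN hx, ((hH ⟨x, hHN hx⟩).1 hx).1⟩, fun ⟨hxN, hx⟩ => ?_⟩
      exact (hH ⟨x, hxN⟩).2 ⟨hx, by simp [CB_eq_univ_of_finite hfin]⟩
    rw [hHker]
    exact hNclosed.inter
      (isClosed_biInter fun φ _ => isClosed_singleton.preimage (map_continuous φ))
  obtain ⟨B, hBcount, hBinf, hB⟩ := exists_CB_eq_CB_inter_ker
    ((hDcount.mono Set.sdiff_subset).image _) himage
    ((hDcount.mono (Set.sep_subset _ _ : Dinf ⊆ D)).image (·.comp ι) :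
      ((·.comp ι) '' Dinf).Countable)
  refine ⟨B, hBcount, hBinf, ?_⟩
  ext n
  rw [hB]
  change _ ↔ (n : X) ∈ H
  rw [hH n, and_comm]
  exact and_congr_right' Set.forall_mem_image

/-- If `H ≤ N ≤ X` with `X` compact Hausdorff abelian, `N` a closed subgroup, `H`
not closed in `X`, and `H = C_D(X)` for a countably infinite set `D ⊆ X̂`, then
`H = C_B(N)` for some countably infinite set `B` of characters of `N`. -/
theorem stmt19 {X : Type*} [AddCommGroup X] [TopologicalSpace X] [IsTopologicalAddGroup X]
    [CompactSpace X] [T2Space X] (N : AddSubgroup X) (hNclosed : IsClosed (N : Set X))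
    (H : AddSubgroup X) (hHN : H ≤ N) (hHnotclosed : ¬ IsClosed (H : Set X))
    (D : Set (GChar X)) (hDcount : D.Countable) (hDinf : D.Infinite)
    (hD : CB D = (H : Set X)) :
    ∃ B : Set (GChar N), B.Countable ∧ B.Infinite ∧ CB B = {n : N | (n : X) ∈ H} :=
  stmt19_general N hNclosed H hHN hHnotclosed D hDcount hD
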